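/- Consider the firefighter process on a finite rooted tree T with fire starting at the root s. For every strategy there exists a strategy saving at least as many vertices such that, for some integer ℓ ≥ 0, exactly one vertex is protected at each depth 1, …, ℓ, no vertex is protected at depth greater than ℓ, and every proper ancestor of every protected vertex burns. -/

import Mathlib

attribute [local instance] Classical.propDecidable

/-- A finite rooted tree, given by a parent function and a depth function. -/
structure FFTree (V : Type*) where
  root : V
  parent : V → V
  depth : V → ℕ
  depth_root : depth root = 0
  parent_root : parent root = root
  depth_parent : ∀ v, v ≠ root → depth v = depth (parent v) + 1

namespace FFTree

variable {V : Type*} [Fintype V] [DecidableEq V] (T : FFTree V)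

/-- `u` is an ancestor of `v` (possibly `u = v`). -/
def IsAncestor (u v : V) : Prop := ∃ n : ℕ, T.parent^[n] v = u

/-- The subtree rooted at `v`: all descendants of `v`, including `v`. -/
noncomputable def subtree (v : V) : Finset V :=
  Finset.univ.filter (fun u => T.IsAncestor v u)

/-- The children of a vertex. -/
noncomputable def children (v : V) : Finset V :=
  Finset.univ.filter (fun u => u ≠ T.root ∧ T.parent u = v)

/-- The set of vertices burned by the end of time step `t` in the firefighter
process on the rooted tree, where the fire starts at the root and `p i` is the
vertex protected in round `i` (if any); in each round the protection happens
first and then the fire spreads from burning vertices to their unprotected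
children. -/
noncomputable def burn (p : ℕ → Option V) : ℕ → Finset V
  | 0 => {T.root}
  | t + 1 => burn p t ∪ Finset.univ.filter
      (fun v => v ≠ T.root ∧ T.parent v ∈ burn p t ∧ ∀ i ≤ t + 1, p i ≠ some v)

/-- `v` is protected at some round of the strategy `p`. -/
def Protected (p : ℕ → Option V) (v : V) : Prop := ∃ i, p i = some v

/-- A valid strategy: nothing is protected at time `0`, and a vertex protected in
round `t` is neither burned before round `t` nor previously protected. -/
def Valid (p : ℕ → Option V) : Prop :=
  p 0 = none ∧ ∀ t v, p t = some v → v ∉ T.burn p (t - 1) ∧ ∀ i < t, p i ≠ some v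

/-- `v` eventually burns under strategy `p`. -/
def Burns (p : ℕ → Option V) (v : V) : Prop := ∃ t, v ∈ T.burn p t

/-- `v` is saved (never burns) under strategy `p`. -/
def Saved (p : ℕ → Option V) (v : V) : Prop := ∀ t, v ∉ T.burn p t

/-- The number of vertices saved by strategy `p`. -/
noncomputable def savedCount (p : ℕ → Option V) : ℕ :=
  (Finset.univ.filter (T.Saved p)).card

/-- The number of vertices burned by strategy `p`. -/
noncomputable def burnedCount (p : ℕ → Option V) : ℕ :=
  (Finset.univ.filter (T.Burns p)).card

end FFTree

/-!
A vertex is saved exactly when one of its ancestors is protected no later than its depth. The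
vertices so protected within depth `k` use distinct rounds among `1, …, k`; this Hall-type count
lets one cover them by an antichain with exactly one vertex at each depth `1, …, ℓ`. Protecting
the vertex at depth `j` in round `j` then saves at least as much, and since no protected vertex
lies above another, every proper ancestor of a protected vertex burns.
-/

namespace FFTree

section Tree

variable {V : Type*} (T : FFTree V)

theorem isAncestor_refl (v : V) : T.IsAncestor v v := ⟨0, rfl⟩

theorem IsAncestor.trans {T : FFTree V} {u v w : V} (huv : T.IsAncestor u v)
    (hvw : T.IsAncestor v w) : T.IsAncestor u w := by
  obtain ⟨m, rfl⟩ := huv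
  obtain ⟨n, rfl⟩ := hvw
  exact ⟨m + n, Function.iterate_add_apply _ _ _ _⟩

theorem isAncestor_iff {u v : V} : T.IsAncestor u v ↔ u = v ∨ T.IsAncestor u (T.parent v) := by
  constructor
  · rintro ⟨_ | n, rfl⟩
    exacts [Or.inl rfl, Or.inr ⟨n, rfl⟩]
  · rintro (rfl | ⟨n, rfl⟩)
    exacts [T.isAncestor_refl _, ⟨n + 1, rfl⟩]

theorem eq_root_of_depth_eq_zero {v : V} (h : T.depth v = 0) : v = T.root := by
  by_contra hv
  have := T.depth_parent v hv
  omega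

theorem depth_iterate_parent (n : ℕ) (v : V) : T.depth (T.parent^[n] v) = T.depth v - n := by
  induction n generalizing v with
  | zero => rfl
  | succ n ih =>
    rw [Function.iterate_succ_apply, ih]
    by_cases hv : v = T.root
    · simp [hv, T.parent_root, T.depth_root]
    · rw [T.depth_parent v hv]
      omega

theorem IsAncestor.depth_le {T : FFTree V} {u v : V} (h : T.IsAncestor u v) :
    T.depth u ≤ T.depth v := by
  obtain ⟨n, rfl⟩ := h
  rw [T.depth_iterate_parent]
  omega

theorem IsAncestor.eq_of_depth_le {T : FFTree V} {u v : V} (h : T.IsAncestor u v)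
    (hd : T.depth v ≤ T.depth u) : u = v := by
  obtain ⟨_ | n, rfl⟩ := h
  · rfl
  rw [T.depth_iterate_parent] at hd
  have hv : v = T.root := T.eq_root_of_depth_eq_zero (by omega)
  rw [hv, Function.iterate_fixed T.parent_root]

theorem exists_isAncestor_depth_eq {k : ℕ} {v : V} (hk : k ≤ T.depth v) :
    ∃ u, T.IsAncestor u v ∧ T.depth u = k :=
  ⟨T.parent^[T.depth v - k] v, ⟨_, rfl⟩, by rw [T.depth_iterate_parent]; omega⟩

structure IsLayeredAntichain (ℓ : ℕ) (w : ℕ → V) : Prop where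
  depth_eq : ∀ j ∈ Finset.Icc 1 ℓ, T.depth (w j) = j
  eq_of_isAncestor : ∀ i ∈ Finset.Icc 1 ℓ, ∀ j ∈ Finset.Icc 1 ℓ, T.IsAncestor (w i) (w j) → i = j

theorem IsLayeredAntichain.update {T : FFTree V} {ℓ : ℕ} {w : ℕ → V}
    (hw : T.IsLayeredAntichain ℓ w) {b : V} (hb : T.depth b = ℓ + 1)
    (hbw : ∀ j ∈ Finset.Icc 1 ℓ, ¬ T.IsAncestor (w j) b) :
    T.IsLayeredAntichain (ℓ + 1) (Function.update w (ℓ + 1) b) := by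
  have hold : ∀ j ∈ Finset.Icc 1 ℓ, Function.update w (ℓ + 1) b j = w j := fun j hj =>
    Function.update_of_ne (by simp only [Finset.mem_Icc] at hj; omega) _ _
  have hIcc : ∀ j ∈ Finset.Icc 1 (ℓ + 1), j ∈ Finset.Icc 1 ℓ ∨ j = ℓ + 1 := by
    intro j hj
    simp only [Finset.mem_Icc] at hj ⊢
    omega
  have hdepth : ∀ j ∈ Finset.Icc 1 (ℓ + 1), T.depth (Function.update w (ℓ + 1) b j) = j := by
    intro j hj
    rcases hIcc j hj with hj | rfl
    · rw [hold j hj, hw.depth_eq j hj]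
    · rw [Function.update_self, hb]
  refine ⟨hdepth, fun i hi j hj hij => ?_⟩
  have hd := hij.depth_le
  rw [hdepth i hi, hdepth j hj] at hd
  rcases hIcc i hi with hi' | rfl <;> rcases hIcc j hj with hj' | rfl
  · rw [hold i hi', hold j hj'] at hij
    exact hw.eq_of_isAncestor i hi' j hj' hij
  · rw [hold i hi', Function.update_self] at hij
    exact absurd hij (hbw i hi')
  · simp only [Finset.mem_Icc] at hj'
    omega
  · rfl

/-- Going through `S` by increasing depth, a vertex not yet covered gets its ancestor at the next
free depth; the counting hypothesis says that this depth never exceeds the vertex's own. -/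
theorem exists_isLayeredAntichain_cover [DecidableEq V] (S : Finset V)
    (hS : ∀ k, (S.filter (fun s => T.depth s ≤ k)).card ≤ k) :
    ∃ ℓ ≤ S.card, ∃ w, T.IsLayeredAntichain ℓ w ∧
      ∀ s ∈ S, ∃ j ∈ Finset.Icc 1 ℓ, T.IsAncestor (w j) s := by
  induction S using Finset.induction_on_max_value T.depth with
  | empty => exact ⟨0, le_rfl, fun _ => T.root, ⟨by simp, by simp⟩, by simp⟩
  | insert a S ha hmax ih =>
    have hcard : (insert a S).card ≤ T.depth a := by
      have := hS (T.depth a)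
      rwa [Finset.filter_true_of_mem (by simpa using hmax)] at this
    obtain ⟨ℓ, hℓ, w, hw, hcover⟩ := ih fun k =>
      (Finset.card_le_card (Finset.filter_subset_filter _ (Finset.subset_insert a S))).trans (hS k)
    rw [Finset.card_insert_of_notMem ha] at hcard ⊢
    by_cases hcov : ∃ j ∈ Finset.Icc 1 ℓ, T.IsAncestor (w j) a
    · exact ⟨ℓ, by omega, w, hw, Finset.forall_mem_insert _ _ _ |>.mpr ⟨hcov, hcover⟩⟩
    obtain ⟨b, hba, hb⟩ := T.exists_isAncestor_depth_eq (k := ℓ + 1) (v := a) (by omega)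
    refine ⟨ℓ + 1, by omega, _, hw.update hb fun j hj hjb => hcov ⟨j, hj, hjb.trans hba⟩,
      Finset.forall_mem_insert _ _ _ |>.mpr ⟨⟨ℓ + 1, by simp, by rwa [Function.update_self]⟩,
        fun s hs => ?_⟩⟩
    obtain ⟨j, hj, hjs⟩ := hcover s hs
    have hjℓ : j ≠ ℓ + 1 := by simp only [Finset.mem_Icc] at hj; omega
    exact ⟨j, by simp only [Finset.mem_Icc] at hj ⊢; omega, by rwa [Function.update_of_ne hjℓ]⟩

/-- `u` is protected no later than the round in which the fire could first reach it. -/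
def ProtectedInTime (p : ℕ → Option V) (u : V) : Prop := ∃ i ≤ T.depth u, p i = some u

end Tree

section Burning

variable {V : Type*} [Fintype V] [DecidableEq V] (T : FFTree V) {p : ℕ → Option V}

theorem mem_burn_iff (hp0 : p 0 = none) (t : ℕ) (v : V) :
    v ∈ T.burn p t ↔ T.depth v ≤ t ∧ ∀ u, T.IsAncestor u v → ¬ T.ProtectedInTime p u := by
  induction t generalizing v with
  | zero =>
    refine ⟨fun hv => ?_, fun ⟨hv, _⟩ => ?_⟩
    · obtain rfl := Finset.mem_singleton.mp hv
      refine ⟨T.depth_root.le, fun u hu ⟨i, hi, hpi⟩ => ?_⟩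
      rw [hu.eq_of_depth_le (by simp [T.depth_root]), T.depth_root, Nat.le_zero] at hi
      simp [hi, hp0] at hpi
    · exact Finset.mem_singleton.mpr (T.eq_root_of_depth_eq_zero (Nat.le_zero.mp hv))
  | succ t ih =>
    simp only [burn, Finset.mem_union, Finset.mem_filter, Finset.mem_univ, true_and, ih]
    constructor
    · rintro (⟨hd, hanc⟩ | ⟨hv, ⟨hd, hanc⟩, hnp⟩)
      · exact ⟨by omega, hanc⟩
      · refine ⟨by rw [T.depth_parent v hv]; omega, fun u hu => ?_⟩
        rcases (T.isAncestor_iff).mp hu with rfl | hu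
        · rintro ⟨i, hi, hpi⟩
          exact hnp i (by rw [T.depth_parent u hv] at hi; omega) hpi
        · exact hanc u hu
    · rintro ⟨hd, hanc⟩
      by_cases hdt : T.depth v ≤ t
      · exact Or.inl ⟨hdt, hanc⟩
      have hv : v ≠ T.root := fun h => by rw [h, T.depth_root] at hdt; omega
      have hdv := T.depth_parent v hv
      refine Or.inr ⟨hv, ⟨by omega, fun u hu => hanc u ((T.isAncestor_iff).mpr (Or.inr hu))⟩,
        fun i hi hpi => hanc v (T.isAncestor_refl v) ⟨i, by omega, hpi⟩⟩

theorem burns_iff (hp0 : p 0 = none) (v : V) :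
    T.Burns p v ↔ ∀ u, T.IsAncestor u v → ¬ T.ProtectedInTime p u :=
  ⟨fun ⟨t, ht⟩ => ((T.mem_burn_iff hp0 t v).mp ht).2,
    fun h => ⟨T.depth v, (T.mem_burn_iff hp0 _ v).mpr ⟨le_rfl, h⟩⟩⟩

theorem saved_iff (hp0 : p 0 = none) (v : V) :
    T.Saved p v ↔ ∃ u, T.IsAncestor u v ∧ T.ProtectedInTime p u := by
  have hsaved : T.Saved p v ↔ ¬ T.Burns p v := not_exists.symm
  simp only [hsaved, T.burns_iff hp0, not_forall, not_not, exists_prop]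

/-- Distinct vertices protected in time by depth `k` occupy distinct rounds among `1, …, k`. -/
theorem card_filter_protectedInTime_le (hp0 : p 0 = none) (k : ℕ) :
    ((Finset.univ.filter (T.ProtectedInTime p)).filter (fun u => T.depth u ≤ k)).card ≤ k := by
  calc _ ≤ ((Finset.Icc 1 k).image p).card := by
        refine Finset.card_le_card_of_injOn some (fun u hu => ?_) (Option.some_injective V).injOn
        simp only [Finset.mem_coe, Finset.mem_filter, Finset.mem_univ, true_and] at hu
        obtain ⟨⟨i, hi, hpi⟩, hk⟩ := hu
        have hi0 : i ≠ 0 := by rintro rfl; simp [hp0] at hpi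
        exact Finset.mem_image.mpr ⟨i, Finset.mem_Icc.mpr ⟨by omega, by omega⟩, hpi⟩
    _ ≤ (Finset.Icc 1 k).card := Finset.card_image_le
    _ = k := by simp

theorem savedCount_le_savedCount {q : ℕ → Option V} (hp0 : p 0 = none) (hq0 : q 0 = none)
    (h : ∀ u, T.ProtectedInTime p u → ∃ w, T.IsAncestor w u ∧ T.ProtectedInTime q w) :
    T.savedCount p ≤ T.savedCount q := by
  refine Finset.card_le_card fun v hv => ?_
  simp only [Finset.mem_filter, Finset.mem_univ, true_and, T.saved_iff hp0, T.saved_iff hq0] at hv ⊢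
  obtain ⟨u, huv, hu⟩ := hv
  obtain ⟨w, hwu, hw⟩ := h u hu
  exact ⟨w, hwu.trans huv, hw⟩

end Burning

section LayeredStrategy

variable {V : Type*} (T : FFTree V)

def layeredStrategy (ℓ : ℕ) (w : ℕ → V) (i : ℕ) : Option V :=
  if i ∈ Finset.Icc 1 ℓ then some (w i) else none

variable {T} {ℓ : ℕ} {w : ℕ → V}

theorem layeredStrategy_eq_some {i : ℕ} {v : V} :
    layeredStrategy ℓ w i = some v ↔ i ∈ Finset.Icc 1 ℓ ∧ w i = v := by
  unfold layeredStrategy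
  split_ifs with hi <;> simp [hi]

theorem protected_layeredStrategy_iff {v : V} :
    Protected (layeredStrategy ℓ w) v ↔ ∃ j ∈ Finset.Icc 1 ℓ, w j = v := by
  simp only [Protected, layeredStrategy_eq_some]

theorem protectedInTime_layeredStrategy_iff (hw : T.IsLayeredAntichain ℓ w) {v : V} :
    T.ProtectedInTime (layeredStrategy ℓ w) v ↔ ∃ j ∈ Finset.Icc 1 ℓ, w j = v := by
  simp only [ProtectedInTime, layeredStrategy_eq_some]
  constructor
  · rintro ⟨j, -, hj, hwj⟩
    exact ⟨j, hj, hwj⟩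
  · rintro ⟨j, hj, rfl⟩
    exact ⟨j, (hw.depth_eq j hj).ge, hj, rfl⟩

theorem layeredStrategy_zero : layeredStrategy ℓ w 0 = none := by
  simp [layeredStrategy]

theorem valid_layeredStrategy [Fintype V] [DecidableEq V] (hw : T.IsLayeredAntichain ℓ w) :
    T.Valid (layeredStrategy ℓ w) := by
  refine ⟨layeredStrategy_zero, fun t v htv => ?_⟩
  obtain ⟨ht, rfl⟩ := layeredStrategy_eq_some.mp htv
  refine ⟨fun hburn => ?_, fun i hi hiv => ?_⟩
  · have := ((T.mem_burn_iff layeredStrategy_zero _ _).mp hburn).1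
    rw [hw.depth_eq t ht] at this
    simp only [Finset.mem_Icc] at ht
    omega
  · obtain ⟨hi', hwi⟩ := layeredStrategy_eq_some.mp hiv
    have := hw.depth_eq i hi'
    rw [hwi, hw.depth_eq t ht] at this
    omega

/-- A vertex protected in time is never a proper ancestor of another one, so nothing above a
protected vertex is ever shielded. -/
theorem burns_layeredStrategy_of_isAncestor [Fintype V] [DecidableEq V]
    (hw : T.IsLayeredAntichain ℓ w) {u v : V} (hv : Protected (layeredStrategy ℓ w) v)
    (huv : T.IsAncestor u v) (hne : u ≠ v) : T.Burns (layeredStrategy ℓ w) u := by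
  obtain ⟨j, hj, rfl⟩ := protected_layeredStrategy_iff.mp hv
  refine (T.burns_iff layeredStrategy_zero u).mpr fun x hxu hx => hne ?_
  obtain ⟨i, hi, rfl⟩ := (protectedInTime_layeredStrategy_iff hw).mp hx
  obtain rfl := hw.eq_of_isAncestor i hi j hj (hxu.trans huv)
  exact huv.eq_of_depth_le hxu.depth_le

end LayeredStrategy

end FFTree

/-- For every strategy on a rooted tree there is a strategy saving at least as
many vertices such that, for some `ℓ`, exactly one vertex is protected at each
depth `1, …, ℓ`, no vertex is protected at depth greater than `ℓ` (or at the
root), and every proper ancestor of every protected vertex burns. -/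
theorem exists_normalized_optimal_strategy
    {V : Type*} [Fintype V] [DecidableEq V] (T : FFTree V)
    (p : ℕ → Option V) (hp : T.Valid p) :
    ∃ q : ℕ → Option V, T.Valid q ∧ T.savedCount p ≤ T.savedCount q ∧
      ∃ ℓ : ℕ,
        (∀ i : ℕ, 1 ≤ i → i ≤ ℓ →
          ∃! v : V, FFTree.Protected q v ∧ T.depth v = i) ∧
        (∀ v : V, FFTree.Protected q v → 1 ≤ T.depth v ∧ T.depth v ≤ ℓ) ∧
        (∀ v : V, FFTree.Protected q v →
          ∀ u : V, T.IsAncestor u v → u ≠ v → T.Burns q u) := by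
  obtain ⟨ℓ, -, w, hw, hcover⟩ := T.exists_isLayeredAntichain_cover _
    (T.card_filter_protectedInTime_le hp.1)
  have hsaved : T.savedCount p ≤ T.savedCount (FFTree.layeredStrategy ℓ w) := by
    refine T.savedCount_le_savedCount hp.1 FFTree.layeredStrategy_zero fun u hu => ?_
    obtain ⟨j, hj, hju⟩ := hcover u (by simpa using hu)
    exact ⟨w j, hju, (FFTree.protectedInTime_layeredStrategy_iff hw).mpr ⟨j, hj, rfl⟩⟩
  refine ⟨_, FFTree.valid_layeredStrategy hw, hsaved, ℓ, fun i hi1 hi2 => ?_, fun v hv => ?_,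
    fun v hv u => FFTree.burns_layeredStrategy_of_isAncestor hw hv⟩
  · have hi : i ∈ Finset.Icc 1 ℓ := Finset.mem_Icc.mpr ⟨hi1, hi2⟩
    refine ⟨w i, ⟨FFTree.protected_layeredStrategy_iff.mpr ⟨i, hi, rfl⟩, hw.depth_eq i hi⟩, ?_⟩
    rintro v ⟨hv, rfl⟩
    obtain ⟨j, hj, rfl⟩ := FFTree.protected_layeredStrategy_iff.mp hv
    rw [hw.depth_eq j hj]
  · obtain ⟨j, hj, rfl⟩ := FFTree.protected_layeredStrategy_iff.mp hv
    rw [hw.depth_eq j hj]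
    exact Finset.mem_Icc.mp hj
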